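/- arXiv:2510.04578 — 4 statements merged into one kernel-verified Lean document; each statement's English description precedes it below -/
import Mathlib

section
/- A (possibly nonassociative, nonunital) commutative K-algebra A is gonosomic if and only if there exist K-vector spaces B and B̃ and bilinear maps b : B × B̃ → B and b̃ : B × B̃ → B̃ such that A is isomorphic, as a K-algebra, to the K-vector space B × B̃ equipped with the product (x,y)(x',y') = (b(x,y') + b(x',y), b̃(x,y') + b̃(x',y)). -/
universe u v

/-- A (commutative, possibly nonassociative and nonunital) `K`-algebra `A` is *gonosomic* if it
admits a basis `(e_i)_{i∈I} ∪ (ẽ_j)_{j∈J}` such that the product of any two vectors of the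
first subfamily is `0` and the product of any two vectors of the second subfamily is `0`. -/
def IsGonosomic (K : Type u) [Field K] (A : Type v) [NonUnitalNonAssocRing A]
    [Module K A] [SMulCommClass K A A] [IsScalarTower K A A] : Prop :=
  ∃ (I J : Type v) (B : Module.Basis (I ⊕ J) K A),
    (∀ i j : I, B (Sum.inl i) * B (Sum.inl j) = 0) ∧
    (∀ p q : J, B (Sum.inr p) * B (Sum.inr q) = 0)

/-- If all pairwise products of elements of `S` vanish, then all products of elements of
the span of `S` vanish. -/
lemma span_mul_span_eq_zero {K : Type u} [Field K]
    {A : Type v} [NonUnitalNonAssocRing A] [Module K A]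
    [SMulCommClass K A A] [IsScalarTower K A A]
    {S : Set A} (h : ∀ a ∈ S, ∀ c ∈ S, a * c = 0) :
    ∀ x ∈ Submodule.span K S, ∀ y ∈ Submodule.span K S, x * y = 0 := by
  have h1 : ∀ a ∈ S, ∀ y ∈ Submodule.span K S, a * y = 0 := by
    intro a ha y hy
    have hle : Submodule.span K S ≤ LinearMap.ker (LinearMap.mul K A a) :=
      Submodule.span_le.2 fun c hc => LinearMap.mem_ker.2 (h a ha c hc)
    exact hle hy
  intro x hx y hy
  have hle : Submodule.span K S ≤ LinearMap.ker ((LinearMap.mul K A).flip y) :=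
    Submodule.span_le.2 fun a ha => LinearMap.mem_ker.2 (h1 a ha y hy)
  exact hle hx

/-- A commutative `K`-algebra `A` is gonosomic if and only if there are
`K`-vector spaces `B`, `B'` and bilinear maps `b : B × B' → B`, `b' : B × B' → B'` such that
`A` is isomorphic, as a `K`-algebra, to `B × B'` with the product
`(x,y)(x',y') = (b x y' + b x' y, b' x y' + b' x' y)`. -/
theorem stmt_5 {K : Type u} [Field K] (hK : (2 : K) ≠ 0)
    {A : Type v} [NonUnitalNonAssocRing A] [Module K A]
    [SMulCommClass K A A] [IsScalarTower K A A]
    (hcomm : ∀ x y : A, x * y = y * x) :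
    IsGonosomic K A ↔
    ∃ (B B' : Type v) (_ : AddCommGroup B) (_ : AddCommGroup B')
      (_ : Module K B) (_ : Module K B')
      (b : B →ₗ[K] B' →ₗ[K] B) (b' : B →ₗ[K] B' →ₗ[K] B')
      (f : A ≃ₗ[K] B × B'),
      ∀ x y : A, f (x * y) =
        (b (f x).1 (f y).2 + b (f y).1 (f x).2,
         b' (f x).1 (f y).2 + b' (f y).1 (f x).2) := by
  constructor
  · rintro ⟨I, J, e, h1, h2⟩
    set p : Submodule K A := Submodule.span K (Set.range (e ∘ Sum.inl)) with hp
    set q : Submodule K A := Submodule.span K (Set.range (e ∘ Sum.inr)) with hq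
    have hrange1 : Set.range (e ∘ Sum.inl) = e '' Set.range Sum.inl := Set.range_comp _ _
    have hrange2 : Set.range (e ∘ Sum.inr) = e '' Set.range Sum.inr := Set.range_comp _ _
    have hdisj : Disjoint p q := by
      rw [hp, hq, hrange1, hrange2]
      exact e.linearIndependent.disjoint_span_image Set.isCompl_range_inl_range_inr.disjoint
    have hcodisj : Codisjoint p q := by
      rw [codisjoint_iff, hp, hq, ← Submodule.span_union, hrange1, hrange2,
        ← Set.image_union, Set.range_inl_union_range_inr, Set.image_univ, e.span_eq]
    have hc : IsCompl p q := ⟨hdisj, hcodisj⟩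
    set feq : A ≃ₗ[K] ↥p × ↥q := (p.prodEquivOfIsCompl q hc).symm with hfeq
    have happly : ∀ (u : p) (v : q), (p.prodEquivOfIsCompl q hc) (u, v) = ↑u + ↑v := by
      intro u v
      simp
    have hsum : ∀ x : A, (↑(feq x).1 + ↑(feq x).2 : A) = x := by
      intro x
      have h2' : (p.prodEquivOfIsCompl q hc) ((feq x).1, (feq x).2) = x := by
        rw [hfeq]; exact (p.prodEquivOfIsCompl q hc).apply_symm_apply x
      exact (happly _ _).symm.trans h2'
    have hzp : ∀ x ∈ p, ∀ y ∈ p, x * y = 0 := by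
      refine span_mul_span_eq_zero ?_
      rintro a ⟨i, rfl⟩ c ⟨j, rfl⟩
      exact h1 i j
    have hzq : ∀ x ∈ q, ∀ y ∈ q, x * y = 0 := by
      refine span_mul_span_eq_zero ?_
      rintro a ⟨i, rfl⟩ c ⟨j, rfl⟩
      exact h2 i j
    set g : ↥p →ₗ[K] ↥q →ₗ[K] A :=
      ((LinearMap.mul K A).comp p.subtype).compl₂ q.subtype with hg
    refine ⟨↥p, ↥q, inferInstance, inferInstance, inferInstance, inferInstance,
      g.compr₂ ((LinearMap.fst K ↥p ↥q).comp feq.toLinearMap),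
      g.compr₂ ((LinearMap.snd K ↥p ↥q).comp feq.toLinearMap), feq, ?_⟩
    intro x y
    have hx := hsum x
    have hy := hsum y
    set u₁ := (feq x).1
    set v₁ := (feq x).2
    set u₂ := (feq y).1
    set v₂ := (feq y).2
    have hxy : x * y = (↑u₁ * ↑v₂ : A) + ↑u₂ * ↑v₁ := by
      calc x * y = (↑u₁ + ↑v₁ : A) * (↑u₂ + ↑v₂ : A) := by rw [hx, hy]
        _ = ↑u₁ * ↑u₂ + ↑u₁ * ↑v₂ + (↑v₁ * ↑u₂ + ↑v₁ * ↑v₂) := by rw [add_mul, mul_add, mul_add]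
        _ = (↑u₁ * ↑v₂ : A) + ↑u₂ * ↑v₁ := by
            rw [hzp ↑u₁ u₁.2 ↑u₂ u₂.2, hzq ↑v₁ v₁.2 ↑v₂ v₂.2, hcomm (↑v₁) (↑u₂)]
            abel
    rw [hxy, map_add]
    simp only [LinearMap.compr₂_apply, LinearMap.compl₂_apply, LinearMap.comp_apply,
      LinearMap.mul_apply', Submodule.coe_subtype, LinearEquiv.coe_coe,
      LinearMap.fst_apply, LinearMap.snd_apply]
    rfl
  · rintro ⟨B, B', _, _, _, _, b, b', f, hf⟩
    have hzero : ∀ u u' : B, f.symm (u, 0) * f.symm (u', 0) = 0 := by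
      intro u u'
      apply f.injective
      rw [hf, f.apply_symm_apply, f.apply_symm_apply, map_zero]
      simp
    have hzero' : ∀ v v' : B', f.symm (0, v) * f.symm (0, v') = 0 := by
      intro v v'
      apply f.injective
      rw [hf, f.apply_symm_apply, f.apply_symm_apply, map_zero]
      simp
    let bB := Module.Basis.ofVectorSpace K B
    let bB' := Module.Basis.ofVectorSpace K B'
    refine ⟨_, _, (bB.prod bB').map f.symm, ?_, ?_⟩
    · intro i j
      rw [Module.Basis.map_apply, Module.Basis.map_apply, Module.Basis.prod_apply, Module.Basis.prod_apply]
      simpa using hzero (bB i) (bB j)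
    · intro i j
      rw [Module.Basis.map_apply, Module.Basis.map_apply, Module.Basis.prod_apply, Module.Basis.prod_apply]
      simpa using hzero' (bB' i) (bB' j)
end

section
/- Let A be a (not necessarily commutative, possibly nonassociative, nonunital) K-algebra and let φ, φ' : A → A be two linear maps. Then the K-vector space A × A equipped with the multiplication (x,y)(x',y') = (φ(xy' + x'y), φ'(xy' + x'y)) is a gonosomic algebra. -/
universe u v

/-- Let `A` be a (not necessarily commutative, possibly nonassociative,
nonunital) `K`-algebra and `φ, φ' : A → A` two linear maps.  Then the `K`-vector space
`A × A` equipped with the multiplication `(x,y)(x',y') = (φ (x y' + x' y), φ' (x y' + x' y))`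
is a gonosomic algebra: it admits a basis `(e_i)_{i∈I} ∪ (ẽ_j)_{j∈J}` on which the product of
any two vectors of the same subfamily vanishes. -/
theorem stmt_6 {K : Type u} [Field K] (hK : (2 : K) ≠ 0)
    {A : Type v} [NonUnitalNonAssocRing A] [Module K A]
    [SMulCommClass K A A] [IsScalarTower K A A]
    (φ φ' : A →ₗ[K] A)
    (P : A × A → A × A → A × A)
    (hP : ∀ x y x' y' : A, P (x, y) (x', y') = (φ (x * y' + x' * y), φ' (x * y' + x' * y))) :
    ∃ (I J : Type v) (B : Module.Basis (I ⊕ J) K (A × A)),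
      (∀ i j : I, P (B (Sum.inl i)) (B (Sum.inl j)) = 0) ∧
      (∀ p q : J, P (B (Sum.inr p)) (B (Sum.inr q)) = 0) := by
  classical
  let b := Module.Basis.ofVectorSpace K A
  refine ⟨_, _, b.prod b, ?_, ?_⟩
  · intro i j
    have h1 : (b.prod b) (Sum.inl i) = (b i, 0) := by
      ext <;> simp [Module.Basis.prod_apply]
    have h2 : (b.prod b) (Sum.inl j) = (b j, 0) := by
      ext <;> simp [Module.Basis.prod_apply]
    rw [h1, h2, hP]
    simp
  · intro p q
    have h1 : (b.prod b) (Sum.inr p) = (0, b p) := by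
      ext <;> simp [Module.Basis.prod_apply]
    have h2 : (b.prod b) (Sum.inr q) = (0, b q) := by
      ext <;> simp [Module.Basis.prod_apply]
    rw [h1, h2, hP]
    simp
end

section
/- Assume the structure constants are nonnegative. Then for every t ≥ 1 and every z ∈ ℝ_+^n × ℝ_+^ν one has ϖ(W^t(z)) ≤ (1/4^{2^t − 1}) · (max_{i,p} σ_{ip})^{2^t − 1} · ϖ(z)^{2^t}. -/
open Filter

/-- The gonosomic evolution operator `W` on `ℝ^n × ℝ^ν` associated with structure constants
`γ_{ipk}` and `γ̃_{ipr}`: it maps `((x_i), (y_p))` to `((x'_k), (y'_r))` with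
`x'_k = Σ_{i,p} γ_{ipk} x_i y_p` and `y'_r = Σ_{i,p} γ̃_{ipr} x_i y_p`. -/
noncomputable def W {n ν : ℕ} (γ : Fin n → Fin ν → Fin n → ℝ)
    (γ' : Fin n → Fin ν → Fin ν → ℝ)
    (z : (Fin n → ℝ) × (Fin ν → ℝ)) : (Fin n → ℝ) × (Fin ν → ℝ) :=
  (fun k => ∑ i, ∑ p, γ i p k * z.1 i * z.2 p,
   fun r => ∑ i, ∑ p, γ' i p r * z.1 i * z.2 p)

/-- The linear form `ϖ(z) = Σ_i x_i + Σ_p y_p` on `ℝ^n × ℝ^ν`. -/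
noncomputable def piW {n ν : ℕ} (z : (Fin n → ℝ) × (Fin ν → ℝ)) : ℝ :=
  ∑ i, z.1 i + ∑ p, z.2 p

/-- `γ_{ip} = Σ_k γ_{ipk}`. -/
noncomputable def gA {n ν : ℕ} (γ : Fin n → Fin ν → Fin n → ℝ)
    (i : Fin n) (p : Fin ν) : ℝ := ∑ k, γ i p k

/-- `γ̃_{ip} = Σ_r γ̃_{ipr}`. -/
noncomputable def gB {n ν : ℕ} (γ' : Fin n → Fin ν → Fin ν → ℝ)
    (i : Fin n) (p : Fin ν) : ℝ := ∑ r, γ' i p r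

/-- `σ_{ip} = γ_{ip} + γ̃_{ip}`. -/
noncomputable def σc {n ν : ℕ} (γ : Fin n → Fin ν → Fin n → ℝ)
    (γ' : Fin n → Fin ν → Fin ν → ℝ) (i : Fin n) (p : Fin ν) : ℝ :=
  gA γ i p + gB γ' i p

/-- The set `O^{n,ν}` of nonnegative points `((x_i),(y_p))` with `x_i y_p = 0` for every
pair `(i,p)` with `σ_{ip} ≠ 0`. -/
def Oset {n ν : ℕ} (γ : Fin n → Fin ν → Fin n → ℝ)
    (γ' : Fin n → Fin ν → Fin ν → ℝ) : Set ((Fin n → ℝ) × (Fin ν → ℝ)) :=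
  {z | (∀ i, 0 ≤ z.1 i) ∧ (∀ p, 0 ≤ z.2 p) ∧
    ∀ i p, σc γ γ' i p ≠ 0 → z.1 i * z.2 p = 0}

/-- The set `S^{n,ν} = S^{n+ν-1} \ O^{n,ν}`, where `S^{n+ν-1}` is the simplex of nonnegative
points with `ϖ(z) = 1`. -/
def Sset {n ν : ℕ} (γ : Fin n → Fin ν → Fin n → ℝ)
    (γ' : Fin n → Fin ν → Fin ν → ℝ) : Set ((Fin n → ℝ) × (Fin ν → ℝ)) :=
  {z | (∀ i, 0 ≤ z.1 i) ∧ (∀ p, 0 ≤ z.2 p) ∧ piW z = 1} \ Oset γ γ'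

/-- The normalized gonosomic operator `V(z) = (1/ϖ(W z)) • W z` (junk value when
`ϖ(W z) = 0`, since in `ℝ` we have `0⁻¹ = 0`). -/
noncomputable def V {n ν : ℕ} (γ : Fin n → Fin ν → Fin n → ℝ)
    (γ' : Fin n → Fin ν → Fin ν → ℝ)
    (z : (Fin n → ℝ) × (Fin ν → ℝ)) : (Fin n → ℝ) × (Fin ν → ℝ) :=
  (piW (W γ γ' z))⁻¹ • W γ γ' z

/-!
Since `ϖ(W z) = Σ σ_{ip} x_i y_p ≤ M (Σ x_i)(Σ y_p)` and `ab ≤ (a + b)² / 4`, one step of `W`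
obeys `ϖ(W z) ≤ (M/4) ϖ(z)²` on the nonnegative cone, which `W` preserves. Iterating a bound
`g (f z) ≤ c g(z)²` squares the previous estimate at every step, whence the exponents
`2^t - 1` on `c` and `2^t` on `g z`.
-/

theorem iterate_le_of_le_mul_sq {α : Type*} {f : α → α} {g : α → ℝ} {s : Set α} {c : ℝ}
    (hc : 0 ≤ c) (hf : Set.MapsTo f s s) (hg : ∀ z ∈ s, 0 ≤ g z)
    (hfg : ∀ z ∈ s, g (f z) ≤ c * g z ^ 2) (t : ℕ) {z : α} (hz : z ∈ s) :
    g (f^[t] z) ≤ c ^ (2 ^ t - 1) * g z ^ 2 ^ t := by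
  induction t with
  | zero => simp
  | succ t ih =>
    have hexp : 2 * (2 ^ t - 1) + 1 = 2 ^ (t + 1) - 1 := by
      have : 1 ≤ 2 ^ t := Nat.one_le_two_pow
      rw [pow_succ]
      omega
    calc g (f^[t + 1] z) = g (f (f^[t] z)) := by rw [Function.iterate_succ_apply']
      _ ≤ c * g (f^[t] z) ^ 2 := hfg _ (hf.iterate t hz)
      _ ≤ c * (c ^ (2 ^ t - 1) * g z ^ 2 ^ t) ^ 2 := by
          gcongr
          exact hg _ (hf.iterate t hz)
      _ = c ^ (2 ^ (t + 1) - 1) * g z ^ 2 ^ (t + 1) := by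
          rw [← hexp, pow_succ 2 t]
          ring

section Gonosomic

variable {n ν : ℕ} {γ : Fin n → Fin ν → Fin n → ℝ} {γ' : Fin n → Fin ν → Fin ν → ℝ}
  {z : (Fin n → ℝ) × (Fin ν → ℝ)}

theorem piW_nonneg (hz : 0 ≤ z) : 0 ≤ piW z :=
  add_nonneg (Finset.sum_nonneg fun i _ => hz.1 i) (Finset.sum_nonneg fun p _ => hz.2 p)

theorem W_nonneg (hγ : ∀ i p k, 0 ≤ γ i p k) (hγ' : ∀ i p r, 0 ≤ γ' i p r) (hz : 0 ≤ z) :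
    0 ≤ W γ γ' z := by
  refine ⟨fun k => ?_, fun r => ?_⟩
  · show 0 ≤ ∑ i, ∑ p, γ i p k * z.1 i * z.2 p
    exact Finset.sum_nonneg fun i _ => Finset.sum_nonneg fun p _ =>
      mul_nonneg (mul_nonneg (hγ i p k) (hz.1 i)) (hz.2 p)
  · show 0 ≤ ∑ i, ∑ p, γ' i p r * z.1 i * z.2 p
    exact Finset.sum_nonneg fun i _ => Finset.sum_nonneg fun p _ =>
      mul_nonneg (mul_nonneg (hγ' i p r) (hz.1 i)) (hz.2 p)

theorem σc_nonneg (hγ : ∀ i p k, 0 ≤ γ i p k) (hγ' : ∀ i p r, 0 ≤ γ' i p r) (i : Fin n)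
    (p : Fin ν) : 0 ≤ σc γ γ' i p :=
  add_nonneg (Finset.sum_nonneg fun k _ => hγ i p k) (Finset.sum_nonneg fun r _ => hγ' i p r)

theorem sum_sum_sum_mul_mul_eq {m : ℕ} (c : Fin n → Fin ν → Fin m → ℝ)
    (x : Fin n → ℝ) (y : Fin ν → ℝ) :
    ∑ k, ∑ i, ∑ p, c i p k * x i * y p = ∑ i, ∑ p, (∑ k, c i p k) * (x i * y p) := by
  simp only [Finset.sum_mul, mul_assoc]
  rw [Finset.sum_comm]
  exact Finset.sum_congr rfl fun i _ => Finset.sum_comm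

theorem piW_W (γ : Fin n → Fin ν → Fin n → ℝ) (γ' : Fin n → Fin ν → Fin ν → ℝ)
    (z : (Fin n → ℝ) × (Fin ν → ℝ)) :
    piW (W γ γ' z) = ∑ i, ∑ p, σc γ γ' i p * (z.1 i * z.2 p) := by
  simp only [piW, W, σc, gA, gB, sum_sum_sum_mul_mul_eq, add_mul, Finset.sum_add_distrib]

theorem piW_W_le {M : ℝ} (hM : ∀ i p, σc γ γ' i p ≤ M) (hM0 : 0 ≤ M) (hz : 0 ≤ z) :
    piW (W γ γ' z) ≤ M / 4 * piW z ^ 2 := by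
  calc piW (W γ γ' z) ≤ ∑ i, ∑ p, M * (z.1 i * z.2 p) := by
        rw [piW_W]
        gcongr with i _ p _
        · exact mul_nonneg (hz.1 i) (hz.2 p)
        · exact hM i p
    _ = M * ((∑ i, z.1 i) * ∑ p, z.2 p) := by
        rw [Fintype.sum_mul_sum, Finset.mul_sum]
        simp only [Finset.mul_sum]
    _ ≤ M * ((∑ i, z.1 i + ∑ p, z.2 p) ^ 2 / 4) := by
        gcongr
        linarith [four_mul_le_sq_add (∑ i, z.1 i) (∑ p, z.2 p)]
    _ = M / 4 * piW z ^ 2 := by rw [piW]; ring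

end Gonosomic

theorem stmt_10_general {n ν : ℕ}
    (γ : Fin n → Fin ν → Fin n → ℝ) (γ' : Fin n → Fin ν → Fin ν → ℝ)
    (hγ : ∀ i p k, 0 ≤ γ i p k) (hγ' : ∀ i p r, 0 ≤ γ' i p r)
    (M : ℝ) (hM : IsGreatest (Set.range fun ip : Fin n × Fin ν => σc γ γ' ip.1 ip.2) M)
    (t : ℕ)
    (z : (Fin n → ℝ) × (Fin ν → ℝ)) (hz1 : ∀ i, 0 ≤ z.1 i) (hz2 : ∀ p, 0 ≤ z.2 p) :
    piW ((W γ γ')^[t] z) ≤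
      (1 / 4 ^ (2 ^ t - 1)) * M ^ (2 ^ t - 1) * piW z ^ 2 ^ t := by
  have hM0 : 0 ≤ M := by
    obtain ⟨⟨i, p⟩, rfl⟩ := hM.1
    exact σc_nonneg hγ hγ' i p
  have hle : ∀ i p, σc γ γ' i p ≤ M := fun i p => hM.2 ⟨(i, p), rfl⟩
  have key := iterate_le_of_le_mul_sq (s := Set.Ici 0) (by positivity : 0 ≤ M / 4)
    (fun _ hw => W_nonneg hγ hγ' hw) (fun _ => piW_nonneg) (fun _ => piW_W_le hle hM0) t
    (show z ∈ Set.Ici 0 from ⟨hz1, hz2⟩)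
  calc _ ≤ (M / 4) ^ (2 ^ t - 1) * piW z ^ 2 ^ t := key
    _ = _ := by rw [div_pow, one_div]; ring

/-- If the structure constants are nonnegative, then for every `t ≥ 1` and
every nonnegative `z` one has
`ϖ(W^t z) ≤ (1/4^(2^t - 1)) * (max_{i,p} σ_{ip})^(2^t - 1) * ϖ(z)^(2^t)`. -/
theorem stmt_10 {n ν : ℕ} (hn : 1 ≤ n) (hν : 1 ≤ ν)
    (γ : Fin n → Fin ν → Fin n → ℝ) (γ' : Fin n → Fin ν → Fin ν → ℝ)
    (hγ : ∀ i p k, 0 ≤ γ i p k) (hγ' : ∀ i p r, 0 ≤ γ' i p r)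
    (M : ℝ) (hM : IsGreatest (Set.range fun ip : Fin n × Fin ν => σc γ γ' ip.1 ip.2) M)
    (t : ℕ) (ht : 1 ≤ t)
    (z : (Fin n → ℝ) × (Fin ν → ℝ)) (hz1 : ∀ i, 0 ≤ z.1 i) (hz2 : ∀ p, 0 ≤ z.2 p) :
    piW ((W γ γ')^[t] z) ≤
      (1 / 4 ^ (2 ^ t - 1)) * M ^ (2 ^ t - 1) * piW z ^ 2 ^ t :=
  stmt_10_general γ γ' hγ hγ' M hM t z hz1 hz2
end

section
/- Assume the structure constants are nonnegative. Let z = ((x_1,…,x_n),(y_1,…,y_ν)) ∈ ℝ_+^n × ℝ_+^ν. If (min_{i,p} √(γ_{ip} γ̃_{ip}))² · (Σ_{i,p} x_i y_p) > 1, then the sequence (ϖ(W^t(z)))_{t≥0} diverges to +∞. -/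
open Filter

private noncomputable def Sf {n ν : ℕ} (w : (Fin n → ℝ) × (Fin ν → ℝ)) : ℝ :=
  ∑ i, ∑ p, w.1 i * w.2 p

private lemma amgm {a b : ℝ} (ha : 0 ≤ a) (hb : 0 ≤ b) : 2 * Real.sqrt (a * b) ≤ a + b := by
  rw [Real.sqrt_mul ha]
  nlinarith [Real.sq_sqrt ha, Real.sq_sqrt hb, sq_nonneg (Real.sqrt a - Real.sqrt b)]

/-- Suppose the structure constants are nonnegative and let `z` be
nonnegative.  If `(min_{i,p} √(γ_{ip} γ̃_{ip}))² · (Σ_{i,p} x_i y_p) > 1`, then the sequence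
`(ϖ(W^t z))_{t ≥ 0}` diverges to `+∞`. -/
theorem stmt_12 {n ν : ℕ} (hn : 1 ≤ n) (hν : 1 ≤ ν)
    (γ : Fin n → Fin ν → Fin n → ℝ) (γ' : Fin n → Fin ν → Fin ν → ℝ)
    (hγ : ∀ i p k, 0 ≤ γ i p k) (hγ' : ∀ i p r, 0 ≤ γ' i p r)
    (m₂ : ℝ) (hm₂ : IsLeast
      (Set.range fun ip : Fin n × Fin ν => Real.sqrt (gA γ ip.1 ip.2 * gB γ' ip.1 ip.2)) m₂)
    (z : (Fin n → ℝ) × (Fin ν → ℝ)) (hz1 : ∀ i, 0 ≤ z.1 i) (hz2 : ∀ p, 0 ≤ z.2 p)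
    (h : 1 < m₂ ^ 2 * ∑ i, ∑ p, z.1 i * z.2 p) :
    Filter.Tendsto (fun t : ℕ => piW ((W γ γ')^[t] z)) Filter.atTop Filter.atTop := by
  classical
  obtain ⟨hm_mem, hm_lb⟩ := hm₂
  obtain ⟨ip0, hip0⟩ := hm_mem
  have hm0 : 0 ≤ m₂ := by rw [← hip0]; exact Real.sqrt_nonneg _
  have hmle : ∀ i p, m₂ ≤ Real.sqrt (gA γ i p * gB γ' i p) := fun i p =>
    hm_lb ⟨(i, p), rfl⟩
  have hgA : ∀ i p, 0 ≤ gA γ i p := fun i p => Finset.sum_nonneg fun k _ => hγ i p k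
  have hgB : ∀ i p, 0 ≤ gB γ' i p := fun i p => Finset.sum_nonneg fun r _ => hγ' i p r
  have hSz : 1 < m₂ ^ 2 * Sf z := h
  have hSfnn : ∀ w : (Fin n → ℝ) × (Fin ν → ℝ), (∀ i, 0 ≤ w.1 i) → (∀ p, 0 ≤ w.2 p) →
      0 ≤ Sf w := fun w h1 h2 =>
    Finset.sum_nonneg fun i _ => Finset.sum_nonneg fun p _ => mul_nonneg (h1 i) (h2 p)
  have hmpos : 0 < m₂ := by
    rcases hm0.lt_or_eq with h' | h'
    · exact h'
    · exfalso; rw [← h'] at hSz; simp at hSz; linarith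
  -- nonnegativity is preserved
  have hWnn : ∀ w : (Fin n → ℝ) × (Fin ν → ℝ), (∀ i, 0 ≤ w.1 i) → (∀ p, 0 ≤ w.2 p) →
      (∀ k, 0 ≤ (W γ γ' w).1 k) ∧ (∀ r, 0 ≤ (W γ γ' w).2 r) := by
    intro w h1 h2
    simp only [W]
    constructor
    · intro k
      exact Finset.sum_nonneg fun i _ => Finset.sum_nonneg fun p _ =>
        mul_nonneg (mul_nonneg (hγ i p k) (h1 i)) (h2 p)
    · intro r
      exact Finset.sum_nonneg fun i _ => Finset.sum_nonneg fun p _ =>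
        mul_nonneg (mul_nonneg (hγ' i p r) (h1 i)) (h2 p)
  have hiter : ∀ t, (∀ i, 0 ≤ ((W γ γ')^[t] z).1 i) ∧ (∀ p, 0 ≤ ((W γ γ')^[t] z).2 p) := by
    intro t
    induction t with
    | zero => exact ⟨hz1, hz2⟩
    | succ t ih => rw [Function.iterate_succ_apply']; exact hWnn _ ih.1 ih.2
  -- the key одно-step inequalities
  have key : ∀ w : (Fin n → ℝ) × (Fin ν → ℝ), (∀ i, 0 ≤ w.1 i) → (∀ p, 0 ≤ w.2 p) →
      (m₂ * Sf w) ^ 2 ≤ Sf (W γ γ' w) ∧ 2 * m₂ * Sf w ≤ piW (W γ γ' w) := by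
    intro w h1 h2
    have hA : ∑ k, (W γ γ' w).1 k = ∑ i, ∑ p, gA γ i p * (w.1 i * w.2 p) := by
      simp only [W, gA, Finset.sum_mul]
      rw [Finset.sum_comm]
      refine Finset.sum_congr rfl fun i _ => ?_
      rw [Finset.sum_comm]
      exact Finset.sum_congr rfl fun p _ => Finset.sum_congr rfl fun k _ => by ring
    have hB : ∑ r, (W γ γ' w).2 r = ∑ i, ∑ p, gB γ' i p * (w.1 i * w.2 p) := by
      simp only [W, gB, Finset.sum_mul]
      rw [Finset.sum_comm]
      refine Finset.sum_congr rfl fun i _ => ?_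
      rw [Finset.sum_comm]
      exact Finset.sum_congr rfl fun p _ => Finset.sum_congr rfl fun r _ => by ring
    have hSW : Sf (W γ γ' w) = (∑ k, (W γ γ' w).1 k) * (∑ r, (W γ γ' w).2 r) := by
      rw [Finset.sum_mul_sum]
      rfl
    -- convert double sums to sums over the product type
    have convA : ∑ ip : Fin n × Fin ν, gA γ ip.1 ip.2 * (w.1 ip.1 * w.2 ip.2)
        = ∑ i, ∑ p, gA γ i p * (w.1 i * w.2 p) := by
      rw [← Finset.univ_product_univ, Finset.sum_product]
    have convB : ∑ ip : Fin n × Fin ν, gB γ' ip.1 ip.2 * (w.1 ip.1 * w.2 ip.2)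
        = ∑ i, ∑ p, gB γ' i p * (w.1 i * w.2 p) := by
      rw [← Finset.univ_product_univ, Finset.sum_product]
    have convS : ∑ ip : Fin n × Fin ν, w.1 ip.1 * w.2 ip.2 = Sf w := by
      rw [← Finset.univ_product_univ, Finset.sum_product]
      rfl
    constructor
    · -- Cauchy–Schwarz
      have cs := Finset.sum_sq_le_sum_mul_sum_of_sq_eq_mul (Finset.univ : Finset (Fin n × Fin ν))
        (r := fun ip => Real.sqrt (gA γ ip.1 ip.2 * gB γ' ip.1 ip.2) * (w.1 ip.1 * w.2 ip.2))
        (f := fun ip => gA γ ip.1 ip.2 * (w.1 ip.1 * w.2 ip.2))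
        (g := fun ip => gB γ' ip.1 ip.2 * (w.1 ip.1 * w.2 ip.2))
        (fun ip _ => mul_nonneg (hgA _ _) (mul_nonneg (h1 _) (h2 _)))
        (fun ip _ => mul_nonneg (hgB _ _) (mul_nonneg (h1 _) (h2 _)))
        (fun ip _ => by
          rw [mul_pow, Real.sq_sqrt (mul_nonneg (hgA _ _) (hgB _ _))]
          ring)
      rw [convA, convB] at cs
      have lb : m₂ * Sf w ≤
          ∑ ip : Fin n × Fin ν, Real.sqrt (gA γ ip.1 ip.2 * gB γ' ip.1 ip.2)
            * (w.1 ip.1 * w.2 ip.2) := by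
        rw [← convS, Finset.mul_sum]
        refine Finset.sum_le_sum fun ip _ => ?_
        exact mul_le_mul_of_nonneg_right (hmle _ _) (mul_nonneg (h1 _) (h2 _))
      have hnn : 0 ≤ m₂ * Sf w := mul_nonneg hm0 (hSfnn w h1 h2)
      calc (m₂ * Sf w) ^ 2
          ≤ (∑ ip : Fin n × Fin ν, Real.sqrt (gA γ ip.1 ip.2 * gB γ' ip.1 ip.2)
              * (w.1 ip.1 * w.2 ip.2)) ^ 2 := by
            exact pow_le_pow_left₀ hnn lb 2
        _ ≤ (∑ i, ∑ p, gA γ i p * (w.1 i * w.2 p)) * ∑ i, ∑ p, gB γ' i p * (w.1 i * w.2 p) := cs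
        _ = Sf (W γ γ' w) := by rw [hSW, hA, hB]
    · -- AM–GM bound on ϖ(W w)
      have : piW (W γ γ' w) = ∑ i, ∑ p, (gA γ i p + gB γ' i p) * (w.1 i * w.2 p) := by
        simp only [piW, hA, hB, ← Finset.sum_add_distrib]
        exact Finset.sum_congr rfl fun i _ => Finset.sum_congr rfl fun p _ => by ring
      rw [this]
      have : 2 * m₂ * Sf w = ∑ i, ∑ p, 2 * m₂ * (w.1 i * w.2 p) := by
        simp [Sf, Finset.mul_sum]
      rw [this]
      refine Finset.sum_le_sum fun i _ => Finset.sum_le_sum fun p _ => ?_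
      refine mul_le_mul_of_nonneg_right ?_ (mul_nonneg (h1 i) (h2 p))
      calc 2 * m₂ ≤ 2 * Real.sqrt (gA γ i p * gB γ' i p) := by linarith [hmle i p]
        _ ≤ gA γ i p + gB γ' i p := amgm (hgA i p) (hgB i p)
  -- the auxiliary sequence u t = m₂² · S(Wᵗ z)
  set u : ℕ → ℝ := fun t => m₂ ^ 2 * Sf ((W γ γ')^[t] z) with hu
  have hu0 : 1 < u 0 := hSz
  have hstep : ∀ t, (u t) ^ 2 ≤ u (t + 1) := by
    intro t
    have hk := (key _ (hiter t).1 (hiter t).2).1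
    have h2 : u (t + 1) = m₂ ^ 2 * Sf (W γ γ' ((W γ γ')^[t] z)) := by
      simp only [hu, Function.iterate_succ_apply']
    have h3 : u t = m₂ ^ 2 * Sf ((W γ γ')^[t] z) := by simp only [hu]
    rw [h2, h3]
    nlinarith [mul_le_mul_of_nonneg_left hk (sq_nonneg m₂)]
  have hugrow : ∀ t, u 0 ^ (t + 1) ≤ u t := by
    intro t
    induction t with
    | zero => rw [pow_one]
    | succ t ih =>
      have h1 : u 0 ^ (t + 1 + 1) ≤ u 0 ^ (2 * (t + 1)) :=
        pow_le_pow_right₀ (le_of_lt hu0) (by omega)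
      have h2 : u 0 ^ (2 * (t + 1)) = (u 0 ^ (t + 1)) ^ 2 := by
        rw [← pow_mul, Nat.mul_comm]
      have h3 : (u 0 ^ (t + 1)) ^ 2 ≤ (u t) ^ 2 :=
        pow_le_pow_left₀ (pow_nonneg (by linarith) _) ih 2
      calc u 0 ^ (t + 1 + 1) ≤ (u 0 ^ (t + 1)) ^ 2 := by rw [← h2]; exact h1
        _ ≤ (u t) ^ 2 := h3
        _ ≤ u (t + 1) := hstep t
  -- the diverging lower bound
  have hLpos : (0:ℝ) < 2 / m₂ := by positivity
  have hL : Tendsto (fun t : ℕ => 2 / m₂ * u 0 ^ t) atTop atTop :=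
    (tendsto_pow_atTop_atTop_of_one_lt hu0).const_mul_atTop hLpos
  refine tendsto_atTop_mono' atTop ?_ hL
  filter_upwards [eventually_ge_atTop 1] with t ht
  obtain ⟨s, rfl⟩ := Nat.exists_eq_add_of_le ht
  rw [Nat.add_comm 1 s]
  have hk := (key _ (hiter s).1 (hiter s).2).2
  have heq : (W γ γ')^[s + 1] z = W γ γ' ((W γ γ')^[s] z) := Function.iterate_succ_apply' _ _ _
  rw [heq]
  have e1 : 2 / m₂ * u s = 2 * m₂ * Sf ((W γ γ')^[s] z) := by
    rw [hu]; field_simp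
  calc 2 / m₂ * u 0 ^ (s + 1) ≤ 2 / m₂ * u s := by
        exact mul_le_mul_of_nonneg_left (hugrow s) (le_of_lt hLpos)
    _ = 2 * m₂ * Sf ((W γ γ')^[s] z) := e1
    _ ≤ piW (W γ γ' ((W γ γ')^[s] z)) := hk
end
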